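/- arXiv:physics/0603229 — 7 statements merged into one kernel-verified Lean document; each statement's English description precedes it below -/
import Mathlib

section
/- In the Community Guided Attachment model with branching factor b and Difficulty Constant c satisfying 1 ≤ c < b, the expected number of edges grows as Θ(n^a) with densification exponent a = 2 - log_b(c); moreover, as c ranges over [1, b), the exponent a ranges over the interval (1, 2]. -/
lemma cga_geom_aux (b c : ℝ) (hb : 1 < b) (hc : 0 < c) (hcb : c < b) :
    ∀ H : ℕ, ∑ j ∈ Finset.Icc 1 H, b ^ (j - 1) / c ^ j ≤ b ^ H / (c ^ H * (b - c)) := by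
  intro H
  induction H with
  | zero =>
    simp
    linarith
  | succ H ih =>
    rw [Finset.sum_Icc_succ_top (by omega : 1 ≤ H + 1)]
    have hkey : b ^ H / (c ^ H * (b - c)) + b ^ (H + 1 - 1) / c ^ (H + 1)
        = b ^ (H + 1) / (c ^ (H + 1) * (b - c)) := by
      have h1 : (c : ℝ) ^ H ≠ 0 := by positivity
      have h2 : (b - c) ≠ 0 := by linarith
      have h3 : (c : ℝ) ≠ 0 := by positivity
      simp only [Nat.add_sub_cancel]
      field_simp
      ring
    linarith [ih]

/-- CGA densification: with branching factor `b` and Difficulty Constant `c`,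
`1 ≤ c < b`, the expected number of edges (which is `n` times the expected
out-degree of a leaf, up to the factor coming from counting ordered pairs)
grows as `Θ(n^a)` with `a = 2 - log_b c`; moreover `c ↦ 2 - log_b c` maps
`[1, b)` onto `(1, 2]`. -/
theorem cga_densification_power_law
    (b : ℕ) (hb : 2 ≤ b) (c : ℝ) (hc1 : 1 ≤ c) (hcb : c < b) :
    (∃ C₁ C₂ : ℝ, 0 < C₁ ∧ 0 < C₂ ∧ ∀ H : ℕ, 1 ≤ H →
      C₁ * ((b : ℝ) ^ H) ^ (2 - Real.logb b c)
        ≤ (b : ℝ) ^ H * ∑ j ∈ Finset.Icc 1 H, ((b : ℝ) - 1) * (b : ℝ) ^ (j - 1) / c ^ j ∧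
      (b : ℝ) ^ H * ∑ j ∈ Finset.Icc 1 H, ((b : ℝ) - 1) * (b : ℝ) ^ (j - 1) / c ^ j
        ≤ C₂ * ((b : ℝ) ^ H) ^ (2 - Real.logb b c)) ∧
    (2 - Real.logb b c ∈ Set.Ioc (1 : ℝ) 2) ∧
    (∀ a ∈ Set.Ioc (1 : ℝ) 2, ∃ c' ∈ Set.Ico (1 : ℝ) (b : ℝ), 2 - Real.logb b c' = a) := by
  set B : ℝ := (b : ℝ) with hBdef
  have hB : (1 : ℝ) < B := by
    have : (2 : ℝ) ≤ (b : ℝ) := by exact_mod_cast hb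
    simp only [hBdef]; linarith
  have hB0 : (0 : ℝ) < B := by linarith
  have hc0 : (0 : ℝ) < c := by linarith
  -- key rpow identity
  have hA : ∀ H : ℕ, (B ^ H) ^ (2 - Real.logb B c) = B ^ (2 * H) / c ^ H := by
    intro H
    rw [← Real.rpow_natCast B H, ← Real.rpow_mul hB0.le, mul_sub, Real.rpow_sub hB0]
    congr 1
    · rw [← Real.rpow_natCast B (2 * H)]
      push_cast
      ring_nf
    · rw [mul_comm, Real.rpow_mul hB0.le, Real.rpow_logb hB0 (by linarith) hc0,
        Real.rpow_natCast]
  refine ⟨⟨(B - 1) / B, (B - 1) / (B - c), div_pos (by linarith) hB0,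
      div_pos (by linarith) (by linarith), ?_⟩, ?_, ?_⟩
  · intro H hH
    obtain ⟨K, rfl⟩ : ∃ K, H = K + 1 := ⟨H - 1, by omega⟩
    have hsum : ∑ j ∈ Finset.Icc 1 (K + 1), (B - 1) * B ^ (j - 1) / c ^ j
        = (B - 1) * ∑ j ∈ Finset.Icc 1 (K + 1), B ^ (j - 1) / c ^ j := by
      rw [Finset.mul_sum]
      exact Finset.sum_congr rfl fun j _ => by rw [mul_div_assoc]
    constructor
    · have hterm : (B - 1) * B ^ (K + 1 - 1) / c ^ (K + 1)
          ≤ ∑ j ∈ Finset.Icc 1 (K + 1), (B - 1) * B ^ (j - 1) / c ^ j := by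
        apply Finset.single_le_sum (f := fun j => (B - 1) * B ^ (j - 1) / c ^ j)
        · intro i _
          have : (0:ℝ) ≤ B - 1 := by linarith
          positivity
        · simp
      have heq : (B - 1) / B * (B ^ (K + 1)) ^ (2 - Real.logb B c)
          = B ^ (K + 1) * ((B - 1) * B ^ (K + 1 - 1) / c ^ (K + 1)) := by
        rw [hA]
        simp only [Nat.add_sub_cancel]
        have h3 : (c : ℝ) ^ (K + 1) ≠ 0 := by positivity
        field_simp
        ring
      rw [heq]
      exact mul_le_mul_of_nonneg_left hterm (by positivity)
    · rw [hsum, hA]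
      have hT := cga_geom_aux B c hB hc0 hcb (K + 1)
      have hB1 : (0 : ℝ) ≤ B - 1 := by linarith
      calc B ^ (K + 1) * ((B - 1) * ∑ j ∈ Finset.Icc 1 (K + 1), B ^ (j - 1) / c ^ j)
          ≤ B ^ (K + 1) * ((B - 1) * (B ^ (K + 1) / (c ^ (K + 1) * (B - c)))) := by
            gcongr
        _ = (B - 1) / (B - c) * (B ^ (2 * (K + 1)) / c ^ (K + 1)) := by
            have h2 : (B - c) ≠ 0 := by linarith
            have h3 : (c : ℝ) ^ (K + 1) ≠ 0 := by positivity
            field_simp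
            ring
  · have hlog0 : 0 ≤ Real.logb B c := Real.logb_nonneg hB hc1
    have hlog1 : Real.logb B c < 1 := by
      have := Real.logb_lt_logb hB hc0 hcb
      rwa [Real.logb_self_eq_one hB] at this
    constructor <;> [linarith; linarith]
  · rintro a ⟨ha1, ha2⟩
    refine ⟨B ^ (2 - a), ⟨?_, ?_⟩, ?_⟩
    · calc (1:ℝ) = B ^ (0:ℝ) := (Real.rpow_zero B).symm
        _ ≤ B ^ (2 - a) := Real.rpow_le_rpow_of_exponent_le hB.le (by linarith)
    · calc B ^ (2 - a) < B ^ (1:ℝ) := Real.rpow_lt_rpow_of_exponent_lt hB (by linarith)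
        _ = B := Real.rpow_one B
    · rw [Real.logb_rpow hB0 (ne_of_gt hB)]
      ring
end

section
/- Let b ≥ 2 and 1 < c < b. In the dynamic Community Guided Attachment model on a complete b-ary tree with n = b^T leaves, where each node links to each other node w at tree-distance d with probability c^{-d/2}, the expected out-degree of a leaf is ∑_{d=0}^{2 log_b n} Θ(b^{d/2} / c^{d/2}) = Θ(n^{1 - log_b c}). -/
/-- Dynamic CGA, case `1 < c < b`: if `N T d` is the number of nodes at
tree-distance `d` from a fixed leaf of the depth-`T` tree, which is
`Θ(b^{d/2})` for `d ≤ 2T`, then the expected out-degree of the leaf,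
`∑_{d=0}^{2T} N T d · c^{-d/2}`, is `Θ(n^{1 - log_b c})` where `n = b^T`. -/
theorem dynamic_cga_out_degree
    (b : ℕ) (hb : 2 ≤ b) (c : ℝ) (hc1 : 1 < c) (hcb : c < b)
    (N : ℕ → ℕ → ℝ)
    (C₁ C₂ : ℝ) (hC₁ : 0 < C₁) (hC₂ : 0 < C₂)
    (hN : ∀ T d : ℕ, d ≤ 2 * T →
      C₁ * (b : ℝ) ^ ((d : ℝ) / 2) ≤ N T d ∧ N T d ≤ C₂ * (b : ℝ) ^ ((d : ℝ) / 2)) :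
    ∃ K₁ K₂ : ℝ, 0 < K₁ ∧ 0 < K₂ ∧ ∀ T : ℕ, 1 ≤ T →
      K₁ * ((b : ℝ) ^ T) ^ (1 - Real.logb b c)
        ≤ ∑ d ∈ Finset.range (2 * T + 1), N T d * c ^ (-(d : ℝ) / 2) ∧
      ∑ d ∈ Finset.range (2 * T + 1), N T d * c ^ (-(d : ℝ) / 2)
        ≤ K₂ * ((b : ℝ) ^ T) ^ (1 - Real.logb b c) := by
  have hb1 : (1:ℝ) < (b:ℝ) := by exact_mod_cast lt_of_lt_of_le one_lt_two hb
  have hb0 : (0:ℝ) < (b:ℝ) := by linarith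
  have hc0 : (0:ℝ) < c := by linarith
  set q : ℝ := (b:ℝ)/c with hq
  have hq1 : 1 < q := (one_lt_div hc0).2 hcb
  have hq0 : 0 < q := by linarith
  set r : ℝ := q ^ ((1:ℝ)/2) with hr
  have hr1 : 1 < r := by
    rw [hr]
    exact (Real.one_lt_rpow_iff_of_pos hq0).2 (Or.inl ⟨hq1, by norm_num⟩)
  -- r^d = q^(d/2)
  have hrd : ∀ d : ℕ, r ^ d = q ^ ((d:ℝ)/2) := by
    intro d
    rw [hr, ← Real.rpow_natCast (q ^ ((1:ℝ)/2)) d, ← Real.rpow_mul hq0.le]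
    ring_nf
  -- term bounds
  have hterm : ∀ T d : ℕ, d ≤ 2*T →
      C₁ * r ^ d ≤ N T d * c ^ (-(d:ℝ)/2) ∧ N T d * c ^ (-(d:ℝ)/2) ≤ C₂ * r ^ d := by
    intro T d hd
    obtain ⟨h1, h2⟩ := hN T d hd
    have hcpow : (0:ℝ) < c ^ (-(d:ℝ)/2) := Real.rpow_pos_of_pos hc0 _
    have key : (b:ℝ) ^ ((d:ℝ)/2) * c ^ (-(d:ℝ)/2) = r ^ d := by
      rw [hrd, hq, Real.div_rpow hb0.le hc0.le, neg_div, Real.rpow_neg hc0.le]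
      ring
    constructor
    · calc C₁ * r ^ d = (C₁ * (b:ℝ) ^ ((d:ℝ)/2)) * c ^ (-(d:ℝ)/2) := by
            rw [mul_assoc, key]
        _ ≤ N T d * c ^ (-(d:ℝ)/2) := mul_le_mul_of_nonneg_right h1 hcpow.le
    · calc N T d * c ^ (-(d:ℝ)/2) ≤ (C₂ * (b:ℝ) ^ ((d:ℝ)/2)) * c ^ (-(d:ℝ)/2) :=
            mul_le_mul_of_nonneg_right h2 hcpow.le
        _ = C₂ * r ^ d := by rw [mul_assoc, key]
  -- the key identity
  have hid : ∀ T : ℕ, ((b:ℝ) ^ T) ^ (1 - Real.logb b c) = q ^ T := by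
    intro T
    have hlogb : (b:ℝ) ^ (Real.logb b c) = c := Real.rpow_logb hb0 hb1.ne' hc0
    rw [← Real.rpow_natCast (b:ℝ) T, ← Real.rpow_mul hb0.le, mul_sub, mul_one,
      Real.rpow_sub hb0, Real.rpow_natCast, mul_comm (T:ℝ), Real.rpow_mul hb0.le,
      hlogb, Real.rpow_natCast, hq, div_pow]
  have hr2T : ∀ T : ℕ, r ^ (2*T) = q ^ T := by
    intro T
    rw [hrd, ← Real.rpow_natCast q T]
    congr 1
    push_cast; ring
  have hr1' : (0:ℝ) < r - 1 := by linarith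
  refine ⟨C₁, C₂ * r / (r - 1), hC₁, div_pos (by positivity) hr1', fun T hT => ?_⟩
  rw [hid T, ← hr2T T]
  constructor
  · -- lower bound: the single term d = 2T
    have hmem : 2*T ∈ Finset.range (2*T+1) := Finset.self_mem_range_succ _
    have hnn : ∀ d ∈ Finset.range (2*T+1), 0 ≤ N T d * c ^ (-(d:ℝ)/2) := by
      intro d hd
      have hd' : d ≤ 2*T := Nat.lt_succ_iff.mp (Finset.mem_range.mp hd)
      have := (hterm T d hd').1
      have : 0 < C₁ * r ^ d := by positivity
      linarith [(hterm T d hd').1]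
    calc C₁ * r ^ (2*T) ≤ N T (2*T) * c ^ (-((2*T : ℕ):ℝ)/2) :=
          (hterm T (2*T) le_rfl).1
      _ ≤ ∑ d ∈ Finset.range (2*T+1), N T d * c ^ (-(d:ℝ)/2) :=
          Finset.single_le_sum hnn hmem
  · -- upper bound: geometric sum
    have hrne : r ≠ 1 := hr1.ne'
    have hsum : ∑ d ∈ Finset.range (2*T+1), r ^ d = (r ^ (2*T+1) - 1)/(r - 1) :=
      geom_sum_eq hrne _
    have hstep : ∑ d ∈ Finset.range (2*T+1), N T d * c ^ (-(d:ℝ)/2)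
        ≤ ∑ d ∈ Finset.range (2*T+1), C₂ * r ^ d := by
      apply Finset.sum_le_sum
      intro d hd
      exact (hterm T d (Nat.lt_succ_iff.mp (Finset.mem_range.mp hd))).2
    calc ∑ d ∈ Finset.range (2*T+1), N T d * c ^ (-(d:ℝ)/2)
        ≤ ∑ d ∈ Finset.range (2*T+1), C₂ * r ^ d := hstep
      _ = C₂ * ((r ^ (2*T+1) - 1)/(r - 1)) := by rw [← Finset.mul_sum, hsum]
      _ ≤ C₂ * (r ^ (2*T+1)/(r - 1)) := by
          apply mul_le_mul_of_nonneg_left _ hC₂.le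
          exact (div_le_div_iff_of_pos_right hr1').2 (by linarith)
      _ = C₂ * r / (r - 1) * r ^ (2*T) := by rw [pow_succ]; ring
end

section
/- Let b ≥ 2 and 1 < c < b. In the dynamic CGA model, the expected in-degree of a node at height h in the tree of depth log_b n is Θ(n^{1 - log_b c} · c^{h/2}); in particular the maximum expected in-degree, achieved at the root (h = log_b n), is Θ(n^{1 - (1/2) log_b c}). -/
/-- Expected in-degree in the dynamic CGA model of a node at height `h` in a
complete `b`-ary tree of depth `T` (`n = b^T`): the sum
`∑_{d≤h} b^d c^{-d/2} + ∑_{h<d≤2T-h} b^{(d+h)/2} c^{-d/2}`. -/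
noncomputable def cgaInDegree (b : ℕ) (c : ℝ) (T h : ℕ) : ℝ :=
  (∑ d ∈ Finset.range (h + 1), (b : ℝ) ^ d * c ^ (-(d : ℝ) / 2)) +
  ∑ d ∈ Finset.Icc (h + 1) (2 * T - h),
    (b : ℝ) ^ (((d : ℝ) + h) / 2) * c ^ (-(d : ℝ) / 2)

/-- Dynamic CGA, case `1 < c < b`: the expected in-degree of a node at height
`h` is `Θ(n^{1 - log_b c} · c^{h/2})`; in particular the maximum expected
in-degree, achieved at the root (`h = T = log_b n`), is `Θ(n^{1 - (1/2) log_b c})`. -/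
theorem dynamic_cga_in_degree
    (b : ℕ) (hb : 2 ≤ b) (c : ℝ) (hc1 : 1 < c) (hcb : c < b) :
    ∃ C₁ C₂ : ℝ, 0 < C₁ ∧ 0 < C₂ ∧ ∀ T : ℕ, 1 ≤ T →
      (∀ h : ℕ, h ≤ T →
        C₁ * ((b : ℝ) ^ T) ^ (1 - Real.logb b c) * c ^ ((h : ℝ) / 2)
          ≤ cgaInDegree b c T h ∧
        cgaInDegree b c T h
          ≤ C₂ * ((b : ℝ) ^ T) ^ (1 - Real.logb b c) * c ^ ((h : ℝ) / 2)) ∧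
      (C₁ * ((b : ℝ) ^ T) ^ (1 - Real.logb b c / 2) ≤ cgaInDegree b c T T ∧
        cgaInDegree b c T T ≤ C₂ * ((b : ℝ) ^ T) ^ (1 - Real.logb b c / 2)) := by
  have hb2 : (2:ℝ) ≤ (b:ℝ) := by exact_mod_cast hb
  have hB1 : (1:ℝ) < (b:ℝ) := by linarith
  have hB0 : (0:ℝ) < (b:ℝ) := by linarith
  have hc0 : (0:ℝ) < c := by linarith
  set B : ℝ := (b:ℝ) with hBdef
  have rpow_pow : ∀ (x : ℝ), 0 ≤ x → ∀ (y : ℝ) (d : ℕ), (x ^ y) ^ d = x ^ (y * d) := by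
    intro x hx y d
    rw [← Real.rpow_natCast (x ^ y) d, ← Real.rpow_mul hx]
  set r : ℝ := B * c ^ (-(1:ℝ)/2) with hrdef
  set q : ℝ := B ^ ((1:ℝ)/2) * c ^ (-(1:ℝ)/2) with hqdef
  set s : ℝ := B * c ^ (-(1:ℝ)) with hsdef
  have hch : ∀ x y : ℝ, c ^ x * c ^ y = c ^ (x + y) := fun x y => (Real.rpow_add hc0 x y).symm
  have hcr0 : (0:ℝ) < c ^ (-(1:ℝ)/2) := Real.rpow_pos_of_pos hc0 _
  have hhalf : c ^ ((1:ℝ)/2) < B := by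
    have h2 : c ^ ((1:ℝ)/2) < c ^ (1:ℝ) := Real.rpow_lt_rpow_of_exponent_lt hc1 (by norm_num)
    rw [Real.rpow_one] at h2; linarith
  have hone : c ^ ((1:ℝ)/2) * c ^ (-(1:ℝ)/2) = 1 := by
    rw [hch]; norm_num
  have hr1 : 1 < r := by
    have h2 := mul_lt_mul_of_pos_right hhalf hcr0
    rw [hone] at h2
    rw [hrdef]; exact h2
  have hBhalf : c ^ ((1:ℝ)/2) < B ^ ((1:ℝ)/2) :=
    Real.rpow_lt_rpow hc0.le hcb (by norm_num)
  have hq1 : 1 < q := by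
    have h2 := mul_lt_mul_of_pos_right hBhalf hcr0
    rw [hone] at h2
    rw [hqdef]; exact h2
  have hs1 : 1 < s := by
    have : s = B / c := by
      rw [hsdef, Real.rpow_neg hc0.le, Real.rpow_one, div_eq_mul_inv]
    rw [this, lt_div_iff₀ hc0, one_mul]; exact hcb
  -- normal form lemma
  have hBCeq : ∀ x₁ y₁ x₂ y₂ : ℝ, x₁ = x₂ → y₁ = y₂ →
      B ^ x₁ * c ^ y₁ = B ^ x₂ * c ^ y₂ := by
    intro _ _ _ _ h1 h2; rw [h1, h2]
  have hrk : ∀ k : ℕ, r ^ k = B ^ ((k:ℝ)) * c ^ (-(k:ℝ)/2) := by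
    intro k
    rw [hrdef, mul_pow, rpow_pow c hc0.le, ← Real.rpow_natCast B k]
    exact hBCeq _ _ _ _ rfl (by ring)
  have hqk : ∀ k : ℕ, q ^ k = B ^ ((k:ℝ)/2) * c ^ (-(k:ℝ)/2) := by
    intro k
    rw [hqdef, mul_pow, rpow_pow c hc0.le, rpow_pow B hB0.le]
    exact hBCeq _ _ _ _ (by ring) (by ring)
  have hsk : ∀ k : ℕ, s ^ k = B ^ ((k:ℝ)) * c ^ (-(k:ℝ)) := by
    intro k
    rw [hsdef, mul_pow, rpow_pow c hc0.le, ← Real.rpow_natCast B k]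
    exact hBCeq _ _ _ _ rfl (by ring)
  have hrs : ∀ k : ℕ, r ^ k = s ^ k * c ^ ((k:ℝ)/2) := by
    intro k
    rw [hrk, hsk, mul_assoc, hch]
    exact hBCeq _ _ _ _ rfl (by ring)
  have hcB : ∀ y : ℝ, c ^ y = B ^ (y * Real.logb B c) := by
    intro y
    rw [mul_comm, Real.rpow_mul hB0.le, Real.rpow_logb hB0 hB1.ne' hc0]
  have hBTL : ∀ T : ℕ, (B ^ T) ^ (1 - Real.logb B c) = s ^ T := by
    intro T
    rw [hsk, hcB (-(T:ℝ)), ← Real.rpow_natCast B T, ← Real.rpow_mul hB0.le,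
      ← Real.rpow_add hB0]
    congr 1; ring
  have hBTL2 : ∀ T : ℕ, (B ^ T) ^ (1 - Real.logb B c / 2) = s ^ T * c ^ ((T:ℝ)/2) := by
    intro T
    rw [hsk, hcB (-(T:ℝ)), hcB ((T:ℝ)/2), ← Real.rpow_natCast B T,
      ← Real.rpow_mul hB0.le, mul_assoc, ← Real.rpow_add hB0, ← Real.rpow_add hB0]
    congr 1; ring
  have hterm1 : ∀ d : ℕ, (B:ℝ) ^ d * c ^ (-(d:ℝ)/2) = r ^ d := by
    intro d
    rw [hrk, ← Real.rpow_natCast B d]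
  have hterm2 : ∀ d h : ℕ, (B:ℝ) ^ (((d:ℝ) + h)/2) * c ^ (-(d:ℝ)/2)
      = B ^ ((h:ℝ)/2) * q ^ d := by
    intro d h
    rw [hqk, ← mul_assoc, ← Real.rpow_add hB0]
    exact hBCeq _ _ _ _ (by ring) rfl
  have hq2 : ∀ T h : ℕ, h ≤ 2*T → B ^ ((h:ℝ)/2) * q ^ (2*T - h)
      = s ^ T * c ^ ((h:ℝ)/2) := by
    intro T h hh
    rw [hqk, hsk, ← mul_assoc, ← Real.rpow_add hB0, mul_assoc, hch,
      Nat.cast_sub hh]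
    push_cast
    exact hBCeq _ _ _ _ (by ring) (by ring)
  have hq0 : (0:ℝ) < q := by linarith
  have geom : ∀ (x : ℝ), 1 < x → ∀ n : ℕ,
      ∑ i ∈ Finset.range (n+1), x ^ i ≤ x / (x-1) * x ^ n := by
    intro x hx n
    rw [geom_sum_eq hx.ne']
    have h1 : (0:ℝ) < x - 1 := by linarith
    have h2 : x / (x-1) * x ^ n * (x-1) = x ^ n * x := by field_simp
    rw [div_le_iff₀ h1, h2, ← pow_succ]
    have hxn : (0:ℝ) < x ^ (n+1) := pow_pos (by linarith) _
    linarith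
  have hS2le : ∀ a m : ℕ, ∑ d ∈ Finset.Icc a m, q ^ d ≤ q / (q-1) * q ^ m := by
    intro a m
    have hsub : Finset.Icc a m ⊆ Finset.range (m+1) := by
      intro x hx
      simp only [Finset.mem_Icc] at hx
      simp only [Finset.mem_range]; omega
    calc ∑ d ∈ Finset.Icc a m, q ^ d
        ≤ ∑ d ∈ Finset.range (m+1), q ^ d :=
          Finset.sum_le_sum_of_subset_of_nonneg hsub (fun i _ _ => pow_nonneg hq0.le i)
      _ ≤ q / (q-1) * q ^ m := geom q hq1 m
  have hrpos : (0:ℝ) < r / (r-1) := div_pos (by linarith) (by linarith)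
  have hqpos : (0:ℝ) < q / (q-1) := div_pos (by linarith) (by linarith)
  set C₂ : ℝ := r / (r-1) + q / (q-1) with hC2def
  have main : ∀ T h : ℕ, h ≤ T →
      s ^ T * c ^ ((h:ℝ)/2) ≤ cgaInDegree b c T h ∧
      cgaInDegree b c T h ≤ C₂ * (s ^ T * c ^ ((h:ℝ)/2)) := by
    intro T h hhT
    have hnn1 : ∀ d ∈ Finset.range (h+1), 0 ≤ (B:ℝ) ^ d * c ^ (-(d:ℝ)/2) := fun d _ =>
      mul_nonneg (pow_nonneg hB0.le d) (Real.rpow_pos_of_pos hc0 _).le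
    have hnn2 : ∀ d ∈ Finset.Icc (h+1) (2*T-h),
        0 ≤ (B:ℝ) ^ (((d:ℝ)+h)/2) * c ^ (-(d:ℝ)/2) := fun d _ =>
      mul_nonneg (Real.rpow_pos_of_pos hB0 _).le (Real.rpow_pos_of_pos hc0 _).le
    have hS1nn : 0 ≤ ∑ d ∈ Finset.range (h+1), (B:ℝ) ^ d * c ^ (-(d:ℝ)/2) :=
      Finset.sum_nonneg hnn1
    have hS2nn : 0 ≤ ∑ d ∈ Finset.Icc (h+1) (2*T-h),
        (B:ℝ) ^ (((d:ℝ)+h)/2) * c ^ (-(d:ℝ)/2) := Finset.sum_nonneg hnn2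
    constructor
    · -- lower bound
      unfold cgaInDegree
      rcases eq_or_lt_of_le hhT with heq | hlt
      · subst heq
        have hmem : h ∈ Finset.range (h+1) := Finset.self_mem_range_succ h
        have h1 : (B:ℝ) ^ h * c ^ (-(h:ℝ)/2)
            ≤ ∑ d ∈ Finset.range (h+1), (B:ℝ) ^ d * c ^ (-(d:ℝ)/2) :=
          Finset.single_le_sum hnn1 hmem
        have h3 : s ^ h * c ^ ((h:ℝ)/2) = (B:ℝ) ^ h * c ^ (-(h:ℝ)/2) := by
          rw [← hrs, ← hterm1]
        rw [h3]
        linarith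
      · have hmem : 2*T - h ∈ Finset.Icc (h+1) (2*T-h) := by
          simp only [Finset.mem_Icc]; omega
        have h1 : (B:ℝ) ^ (((((2*T-h : ℕ)):ℝ) + h)/2) * c ^ (-((2*T-h : ℕ):ℝ)/2)
            ≤ ∑ d ∈ Finset.Icc (h+1) (2*T-h), (B:ℝ) ^ (((d:ℝ)+h)/2) * c ^ (-(d:ℝ)/2) :=
          Finset.single_le_sum hnn2 hmem
        have h3 : (B:ℝ) ^ (((((2*T-h : ℕ)):ℝ) + h)/2) * c ^ (-((2*T-h : ℕ):ℝ)/2)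
            = s ^ T * c ^ ((h:ℝ)/2) := by
          rw [hterm2, hq2 T h (by omega)]
        linarith
    · -- upper bound
      unfold cgaInDegree
      have hu1 : ∑ d ∈ Finset.range (h+1), (B:ℝ) ^ d * c ^ (-(d:ℝ)/2)
          ≤ r / (r-1) * r ^ h := by
        rw [Finset.sum_congr rfl (fun d _ => hterm1 d)]
        exact geom r hr1 h
      have hrh : r ^ h ≤ s ^ T * c ^ ((h:ℝ)/2) := by
        rw [hrs h]
        have hs : s ^ h ≤ s ^ T := pow_le_pow_right₀ hs1.le hhT
        exact mul_le_mul_of_nonneg_right hs (Real.rpow_pos_of_pos hc0 _).le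
      have hu1' : ∑ d ∈ Finset.range (h+1), (B:ℝ) ^ d * c ^ (-(d:ℝ)/2)
          ≤ r / (r-1) * (s ^ T * c ^ ((h:ℝ)/2)) :=
        hu1.trans (mul_le_mul_of_nonneg_left hrh hrpos.le)
      have e2 : ∑ d ∈ Finset.Icc (h+1) (2*T-h), (B:ℝ) ^ (((d:ℝ)+h)/2) * c ^ (-(d:ℝ)/2)
          = B ^ ((h:ℝ)/2) * ∑ d ∈ Finset.Icc (h+1) (2*T-h), q ^ d := by
        rw [Finset.mul_sum]
        exact Finset.sum_congr rfl fun d _ => hterm2 d h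
      have hu2 : ∑ d ∈ Finset.Icc (h+1) (2*T-h), (B:ℝ) ^ (((d:ℝ)+h)/2) * c ^ (-(d:ℝ)/2)
          ≤ q / (q-1) * (s ^ T * c ^ ((h:ℝ)/2)) := by
        rw [e2]
        calc B ^ ((h:ℝ)/2) * ∑ d ∈ Finset.Icc (h+1) (2*T-h), q ^ d
            ≤ B ^ ((h:ℝ)/2) * (q / (q-1) * q ^ (2*T-h)) :=
              mul_le_mul_of_nonneg_left (hS2le _ _) (Real.rpow_pos_of_pos hB0 _).le
          _ = q / (q-1) * (B ^ ((h:ℝ)/2) * q ^ (2*T-h)) := by ring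
          _ = q / (q-1) * (s ^ T * c ^ ((h:ℝ)/2)) := by rw [hq2 T h (by omega)]
      rw [hC2def, add_mul]
      linarith
  refine ⟨1, C₂, one_pos, by positivity, fun T _ => ⟨fun h hhT => ?_, ?_⟩⟩
  · constructor
    · rw [one_mul, hBTL]
      exact (main T h hhT).1
    · rw [mul_assoc, hBTL]
      exact (main T h hhT).2
  · constructor
    · rw [one_mul, hBTL2]
      exact (main T T le_rfl).1
    · rw [hBTL2]
      exact (main T T le_rfl).2
end

section
/- Let b ≥ 2 and b < c < b^2. In the dynamic CGA model, the expected in-degree of a node at height h is maximized by the term at tree-distance d = h and equals Θ(b^h c^{-h/2}); consequently the in-degrees follow a Zipf distribution with exponent 1 - (1/2) log_b c. -/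
lemma geom_aux {y : ℝ} (hy0 : 0 ≤ y) (hy1 : y < 1) (n : ℕ) :
    ∑ i ∈ Finset.range n, y ^ i ≤ (1 - y)⁻¹ := by
  have h1y : (0:ℝ) < 1 - y := by linarith
  rw [geom_sum_eq (ne_of_lt hy1) n]
  have e : (y ^ n - 1) / (y - 1) = (1 - y ^ n) / (1 - y) := by
    rw [div_eq_div_iff (by linarith) (by linarith)]; ring
  rw [e, inv_eq_one_div]
  gcongr
  · nlinarith [pow_nonneg hy0 n]

/-- Dynamic CGA, case `b < c < b²`: the expected in-degree of a node at height
`h` is dominated by the term at distance `d = h` and equals `Θ(b^h c^{-h/2})`;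
consequently the in-degrees follow a Zipf distribution with exponent
`1 - (1/2) log_b c`: a node of degree-rank `r = b^t` (at depth `t = T - h`, so
`h = T - t`) has expected in-degree `Θ(z / r^{1 - (1/2) log_b c})` where
`z = (b^T)^{1 - (1/2) log_b c}` is the maximum expected in-degree. -/
theorem dynamic_cga_in_degree_middle
    (b : ℕ) (hb : 2 ≤ b) (c : ℝ) (hbc : (b : ℝ) < c) (hcb2 : c < (b : ℝ) ^ 2) :
    ∃ C₁ C₂ : ℝ, 0 < C₁ ∧ 0 < C₂ ∧ ∀ T : ℕ, 1 ≤ T →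
      (∀ h : ℕ, h ≤ T →
        C₁ * ((b : ℝ) ^ h * c ^ (-(h : ℝ) / 2)) ≤ cgaInDegree b c T h ∧
        cgaInDegree b c T h ≤ C₂ * ((b : ℝ) ^ h * c ^ (-(h : ℝ) / 2))) ∧
      (∀ t : ℕ, t ≤ T →
        C₁ * (((b : ℝ) ^ T) ^ (1 - Real.logb b c / 2)
                / ((b : ℝ) ^ t) ^ (1 - Real.logb b c / 2))
            ≤ cgaInDegree b c T (T - t) ∧
        cgaInDegree b c T (T - t)
            ≤ C₂ * (((b : ℝ) ^ T) ^ (1 - Real.logb b c / 2)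
                / ((b : ℝ) ^ t) ^ (1 - Real.logb b c / 2))) := by
  have hb0 : (0:ℝ) < b := by positivity
  have hc0 : (0:ℝ) < c := lt_trans hb0 hbc
  set x : ℝ := (b : ℝ) * c ^ (-(1:ℝ)/2) with hxdef
  set y : ℝ := (b : ℝ) ^ ((1:ℝ)/2) * c ^ (-(1:ℝ)/2) with hydef
  have hcinv : c ^ (-(1:ℝ)/2) = (c ^ ((1:ℝ)/2))⁻¹ := by
    rw [← Real.rpow_neg hc0.le]; norm_num
  have hcs0 : (0:ℝ) < c ^ ((1:ℝ)/2) := Real.rpow_pos_of_pos hc0 _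
  have hbs0 : (0:ℝ) < (b:ℝ) ^ ((1:ℝ)/2) := Real.rpow_pos_of_pos hb0 _
  -- 1 < x
  have hcsb : c ^ ((1:ℝ)/2) < (b : ℝ) := by
    have h1 : c ^ ((1:ℝ)/2) < ((b:ℝ) ^ 2) ^ ((1:ℝ)/2) :=
      Real.rpow_lt_rpow hc0.le hcb2 (by norm_num)
    have h2 : ((b:ℝ) ^ 2) ^ ((1:ℝ)/2) = (b:ℝ) := by
      rw [← Real.rpow_natCast (b:ℝ) 2, ← Real.rpow_mul hb0.le]
      norm_num
    rwa [h2] at h1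
  have hx1 : 1 < x := by
    rw [hxdef, hcinv, ← div_eq_mul_inv]
    exact (one_lt_div hcs0).mpr hcsb
  have hx0 : 0 < x := lt_trans one_pos hx1
  -- 0 < y < 1
  have hbsc : (b:ℝ) ^ ((1:ℝ)/2) < c ^ ((1:ℝ)/2) :=
    Real.rpow_lt_rpow hb0.le hbc (by norm_num)
  have hy1 : y < 1 := by
    rw [hydef, hcinv, mul_inv_lt_iff₀ hcs0, one_mul]
    exact hbsc
  have hy0 : 0 < y := by positivity
  -- key identities
  have key1 : ∀ d : ℕ, (b:ℝ) ^ d * c ^ (-(d:ℝ)/2) = x ^ d := by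
    intro d
    rw [hxdef, mul_pow, ← Real.rpow_natCast (c ^ (-(1:ℝ)/2)) d,
      ← Real.rpow_mul hc0.le]
    congr 1
    ring_nf
  have keyy : ∀ d : ℕ, y ^ d = (b:ℝ) ^ ((d:ℝ)/2) * c ^ (-(d:ℝ)/2) := by
    intro d
    rw [hydef, mul_pow, ← Real.rpow_natCast ((b:ℝ) ^ ((1:ℝ)/2)) d,
      ← Real.rpow_mul hb0.le, ← Real.rpow_natCast (c ^ (-(1:ℝ)/2)) d,
      ← Real.rpow_mul hc0.le]
    congr 1 <;> ring_nf
  have key2 : ∀ h d : ℕ, (b:ℝ) ^ (((d:ℝ) + h)/2) * c ^ (-(d:ℝ)/2)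
      = (b:ℝ) ^ ((h:ℝ)/2) * y ^ d := by
    intro h d
    rw [keyy d, show ((d:ℝ) + h)/2 = (h:ℝ)/2 + (d:ℝ)/2 by ring,
      Real.rpow_add hb0]
    ring
  have keyx : ∀ h : ℕ, (b:ℝ) ^ ((h:ℝ)/2) * y ^ h = x ^ h := by
    intro h
    rw [keyy h, ← mul_assoc, ← Real.rpow_add hb0, ← key1 h]
    congr 1
    rw [show (h:ℝ)/2 + (h:ℝ)/2 = (h:ℝ) by ring, Real.rpow_natCast]
  -- constants
  refine ⟨1, x / (x - 1) + (1 - y)⁻¹, one_pos,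
    add_pos (div_pos hx0 (by linarith)) (inv_pos.mpr (by linarith)), ?_⟩
  intro T hT
  have main : ∀ h : ℕ, h ≤ T →
      1 * ((b : ℝ) ^ h * c ^ (-(h : ℝ) / 2)) ≤ cgaInDegree b c T h ∧
      cgaInDegree b c T h
        ≤ (x / (x - 1) + (1 - y)⁻¹) * ((b : ℝ) ^ h * c ^ (-(h : ℝ) / 2)) := by
    intro h _
    have hS1 : (∑ d ∈ Finset.range (h + 1), (b : ℝ) ^ d * c ^ (-(d : ℝ) / 2))
        = ∑ d ∈ Finset.range (h + 1), x ^ d := by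
      refine Finset.sum_congr rfl fun d _ => key1 d
    have hS2 : (∑ d ∈ Finset.Icc (h + 1) (2 * T - h),
          (b : ℝ) ^ (((d : ℝ) + h) / 2) * c ^ (-(d : ℝ) / 2))
        = (b:ℝ) ^ ((h:ℝ)/2) * ∑ d ∈ Finset.Icc (h + 1) (2 * T - h), y ^ d := by
      rw [Finset.mul_sum]
      refine Finset.sum_congr rfl fun d _ => key2 h d
    rw [key1 h, one_mul]
    unfold cgaInDegree
    rw [hS1, hS2]
    constructor
    · have h1 : x ^ h ≤ ∑ d ∈ Finset.range (h + 1), x ^ d := by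
        refine Finset.single_le_sum (fun i _ => pow_nonneg hx0.le i) ?_
        simp
      have h2 : 0 ≤ (b:ℝ) ^ ((h:ℝ)/2) * ∑ d ∈ Finset.Icc (h + 1) (2 * T - h), y ^ d := by
        have : 0 ≤ ∑ d ∈ Finset.Icc (h + 1) (2 * T - h), y ^ d :=
          Finset.sum_nonneg fun d _ => pow_nonneg hy0.le d
        positivity
      linarith
    · have hA : ∑ d ∈ Finset.range (h + 1), x ^ d ≤ x / (x - 1) * x ^ h := by
        rw [geom_sum_eq (ne_of_gt hx1)]
        have e : x / (x - 1) * x ^ h = x ^ (h + 1) / (x - 1) := by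
          rw [pow_succ]; ring
        rw [e]
        gcongr
        · linarith
      have hB : (b:ℝ) ^ ((h:ℝ)/2) * ∑ d ∈ Finset.Icc (h + 1) (2 * T - h), y ^ d
          ≤ (1 - y)⁻¹ * x ^ h := by
        have hsum : ∑ d ∈ Finset.Icc (h + 1) (2 * T - h), y ^ d
            ≤ y ^ h * (1 - y)⁻¹ := by
          rw [← Finset.Ico_add_one_right_eq_Icc, Finset.sum_Ico_eq_sum_range]
          have : ∀ i ∈ Finset.range (2 * T - h + 1 - (h + 1)), y ^ (h + 1 + i)
              = y ^ (h+1) * y ^ i := by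
            intro i _; rw [pow_add]
          rw [Finset.sum_congr rfl this, ← Finset.mul_sum]
          have hg := geom_aux hy0.le hy1 (2 * T - h + 1 - (h + 1))
          have hyh : y ^ (h+1) ≤ y ^ h := pow_le_pow_of_le_one hy0.le hy1.le (by omega)
          calc y ^ (h+1) * ∑ i ∈ Finset.range (2 * T - h + 1 - (h + 1)), y ^ i
              ≤ y ^ (h+1) * (1 - y)⁻¹ :=
                mul_le_mul_of_nonneg_left hg (pow_nonneg hy0.le _)
            _ ≤ y ^ h * (1 - y)⁻¹ :=
                mul_le_mul_of_nonneg_right hyh (inv_nonneg.mpr (by linarith))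
        calc (b:ℝ) ^ ((h:ℝ)/2) * ∑ d ∈ Finset.Icc (h + 1) (2 * T - h), y ^ d
            ≤ (b:ℝ) ^ ((h:ℝ)/2) * (y ^ h * (1 - y)⁻¹) :=
              mul_le_mul_of_nonneg_left hsum (by positivity)
          _ = (1 - y)⁻¹ * x ^ h := by rw [← mul_assoc, keyx h]; ring
      calc (∑ d ∈ Finset.range (h + 1), x ^ d) +
            (b:ℝ) ^ ((h:ℝ)/2) * ∑ d ∈ Finset.Icc (h + 1) (2 * T - h), y ^ d
          ≤ x / (x - 1) * x ^ h + (1 - y)⁻¹ * x ^ h := add_le_add hA hB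
        _ = (x / (x - 1) + (1 - y)⁻¹) * x ^ h := by ring
  refine ⟨main, ?_⟩
  intro t ht
  have hbne1 : (b:ℝ) ≠ 1 := by
    have : (2:ℝ) ≤ (b:ℝ) := by exact_mod_cast hb
    linarith
  have heq : ((b : ℝ) ^ T) ^ (1 - Real.logb b c / 2)
      / ((b : ℝ) ^ t) ^ (1 - Real.logb b c / 2)
      = (b : ℝ) ^ (T - t) * c ^ (-((T - t : ℕ) : ℝ) / 2) := by
    set L := Real.logb b c with hL
    set α : ℝ := 1 - L / 2 with hα
    have e1 : ((b : ℝ) ^ T) ^ α = (b:ℝ) ^ ((T:ℝ) * α) := by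
      rw [← Real.rpow_natCast (b:ℝ) T, ← Real.rpow_mul hb0.le]
    have e2 : ((b : ℝ) ^ t) ^ α = (b:ℝ) ^ ((t:ℝ) * α) := by
      rw [← Real.rpow_natCast (b:ℝ) t, ← Real.rpow_mul hb0.le]
    rw [e1, e2, ← Real.rpow_sub hb0]
    have hcast : ((T - t : ℕ) : ℝ) = (T:ℝ) - (t:ℝ) := by
      exact Nat.cast_sub ht
    have e3 : (T:ℝ) * α - (t:ℝ) * α = ((T - t : ℕ):ℝ) + L * (-(((T - t : ℕ):ℝ)) / 2) := by
      rw [hcast, hα]; ring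
    rw [e3, Real.rpow_add hb0, Real.rpow_natCast, Real.rpow_mul hb0.le,
      Real.rpow_logb hb0 hbne1 hc0]
  rw [heq]
  exact main (T - t) (Nat.sub_le T t)
end

section
/- Suppose a graph with maximum degree d_max has exactly c·d^{-γ} nodes of degree d for each 1 ≤ d ≤ d_max, where 1 < γ < 2 and log c = γ log d_max. Then as d_max → ∞, the ratio log(e)/log(n), where n ≈ c·(d_max^{1-γ} - 1)/(1-γ) is the number of nodes and e ≈ (c/2)·(d_max^{2-γ} - 1)/(2-γ) is the number of edges, converges to 2/γ. -/
open Filter Real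

/-- Constant-exponent power-law degree distribution, case `1 < γ < 2`: with
`c · d^{-γ}` nodes of degree `d` up to `d_max`, where `log c = γ log d_max`
(i.e. `c = d_max^γ`), the number of nodes is `n = c(d_max^{1-γ}-1)/(1-γ)` and
the number of edges is `e = (c/2)(d_max^{2-γ}-1)/(2-γ)`; the densification
exponent `log e / log n` converges to `2/γ` as `d_max → ∞`. -/
theorem dpl_exponent_of_constant_degree_exponent_mid
    (γ : ℝ) (hγ1 : 1 < γ) (hγ2 : γ < 2) :
    Tendsto
      (fun dmax : ℝ =>
        Real.log ((dmax ^ γ / 2) * ((dmax ^ (2 - γ) - 1) / (2 - γ))) /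
        Real.log (dmax ^ γ * ((dmax ^ (1 - γ) - 1) / (1 - γ))))
      atTop (nhds (2 / γ)) := by
  have hγ0 : (0:ℝ) < γ := by linarith
  have h2γ : (0:ℝ) < 2 - γ := by linarith
  have hγ1' : (0:ℝ) < γ - 1 := by linarith
  set f : ℝ → ℝ := fun x => (1 - x ^ (γ - 2)) / (2 * (2 - γ)) with hfdef
  set g : ℝ → ℝ := fun x => (1 - x ^ (1 - γ)) / (γ - 1) with hgdef
  have hf : Tendsto f atTop (nhds (1 / (2 * (2 - γ)))) := by
    have h1 : Tendsto (fun x:ℝ => x ^ (γ - 2)) atTop (nhds 0) := by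
      have := tendsto_rpow_neg_atTop (y := 2 - γ) (by linarith)
      simpa [neg_sub] using this
    have := (h1.const_sub 1).div_const (2 * (2 - γ))
    simpa using this
  have hg : Tendsto g atTop (nhds (1 / (γ - 1))) := by
    have h1 : Tendsto (fun x:ℝ => x ^ (1 - γ)) atTop (nhds 0) := by
      have := tendsto_rpow_neg_atTop (y := γ - 1) (by linarith)
      simpa [neg_sub] using this
    have := (h1.const_sub 1).div_const (γ - 1)
    simpa using this
  have hlf : Tendsto (fun x => Real.log (f x)) atTop
      (nhds (Real.log (1/(2*(2-γ))))) :=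
    (Real.continuousAt_log (by positivity)).tendsto.comp hf
  have hlg : Tendsto (fun x => Real.log (g x)) atTop
      (nhds (Real.log (1/(γ-1)))) :=
    (Real.continuousAt_log (by positivity)).tendsto.comp hg
  have hq1 : Tendsto (fun x => Real.log (f x) / Real.log x) atTop (nhds 0) :=
    hlf.div_atTop Real.tendsto_log_atTop
  have hq2 : Tendsto (fun x => Real.log (g x) / Real.log x) atTop (nhds 0) :=
    hlg.div_atTop Real.tendsto_log_atTop
  have hmain : Tendsto (fun x => (2 + Real.log (f x) / Real.log x) /
      (γ + Real.log (g x) / Real.log x)) atTop (nhds (2 / γ)) := by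
    have := ((tendsto_const_nhds (x := (2:ℝ))).add hq1).div
      ((tendsto_const_nhds (x := γ)).add hq2) (by simpa using hγ0.ne')
    simpa only [add_zero, Pi.div_def] using this
  refine hmain.congr' ?_
  filter_upwards [eventually_gt_atTop (1:ℝ)] with x hx
  have hx0 : (0:ℝ) < x := by linarith
  have hL0 : 0 < Real.log x := Real.log_pos hx
  have hL : Real.log x ≠ 0 := ne_of_gt hL0
  have hfx : 0 < f x := by
    have h1 : x ^ (γ - 2) < 1 :=
      Real.rpow_lt_one_of_one_lt_of_neg hx (by linarith)
    exact div_pos (by linarith) (by linarith)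
  have hgx : 0 < g x := by
    have h1 : x ^ (1 - γ) < 1 :=
      Real.rpow_lt_one_of_one_lt_of_neg hx (by linarith)
    exact div_pos (by linarith) (by linarith)
  have hpow : x ^ γ * x ^ (2 - γ) = x ^ (2:ℝ) := by
    rw [← Real.rpow_add hx0]; norm_num
  have hpow2 : x ^ (2:ℝ) * x ^ (γ - 2) = x ^ γ := by
    rw [← Real.rpow_add hx0]; norm_num
  have key : x ^ γ * (x ^ (2 - γ) - 1) = x ^ (2:ℝ) * (1 - x ^ (γ - 2)) := by
    rw [mul_sub, mul_sub, hpow, hpow2]; ring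
  have hE1 : (x ^ γ / 2) * ((x ^ (2 - γ) - 1) / (2 - γ)) = x ^ (2:ℝ) * f x := by
    calc (x ^ γ / 2) * ((x ^ (2 - γ) - 1) / (2 - γ))
        = (x ^ γ * (x ^ (2 - γ) - 1)) / (2 * (2 - γ)) := by
          rw [div_mul_div_comm]
      _ = (x ^ (2:ℝ) * (1 - x ^ (γ - 2))) / (2 * (2 - γ)) := by rw [key]
      _ = x ^ (2:ℝ) * f x := by rw [hfdef, mul_div_assoc]
  have hE2 : x ^ γ * ((x ^ (1 - γ) - 1) / (1 - γ)) = x ^ γ * g x := by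
    rw [hgdef]
    have h1 : (1:ℝ) - γ ≠ 0 := by linarith
    have h2 : γ - 1 ≠ 0 := by linarith
    field_simp
    ring
  rw [hE1, hE2, Real.log_mul (by positivity) hfx.ne',
    Real.log_mul (by positivity) hgx.ne', Real.log_rpow hx0, Real.log_rpow hx0]
  rw [show (2 + Real.log (f x)/Real.log x) = (2*Real.log x + Real.log (f x))/Real.log x by
      field_simp,
    show (γ + Real.log (g x)/Real.log x) = (γ*Real.log x + Real.log (g x))/Real.log x by
      field_simp]
  rw [div_div_div_cancel_right₀]
  exact hL
end

section
/- Suppose a graph with maximum degree d_max has c·d^{-γ} nodes of degree d with γ > 2 and log c = γ log d_max. Then as d_max → ∞, log(e)/log(n) converges to 1, i.e., the graph does not densify (the Densification Power Law exponent is a = 1). -/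
open Filter Real

private lemma ratio_rewrite (γ : ℝ) (L a b : ℝ) (hL : L ≠ 0) :
    (γ * L + a) / (γ * L + b) = (γ + a / L) / (γ + b / L) := by
  have h1 : γ + a / L = (γ * L + a) / L := by field_simp
  have h2 : γ + b / L = (γ * L + b) / L := by field_simp
  rw [h1, h2, div_div_div_cancel_right₀ hL]

/-- Constant-exponent power-law degree distribution, case `γ > 2`: with
`c · d^{-γ}` nodes of degree `d` up to `d_max`, where `log c = γ log d_max`
(i.e. `c = d_max^γ`), the number of nodes is `n = c(d_max^{1-γ}-1)/(1-γ)` and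
the number of edges is `e = (c/2)(d_max^{2-γ}-1)/(2-γ)`; the densification
exponent `log e / log n` converges to `1` (no densification) as `d_max → ∞`. -/
theorem dpl_exponent_of_constant_degree_exponent_high
    (γ : ℝ) (hγ : 2 < γ) :
    Tendsto
      (fun dmax : ℝ =>
        Real.log ((dmax ^ γ / 2) * ((dmax ^ (2 - γ) - 1) / (2 - γ))) /
        Real.log (dmax ^ γ * ((dmax ^ (1 - γ) - 1) / (1 - γ))))
      atTop (nhds 1) := by
  have hγ0 : (0:ℝ) < γ := by linarith
  -- limits of the bounded factors
  have h2γ : (2 - γ) < 0 := by linarith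
  have h1γ : (1 - γ) < 0 := by linarith
  have hrpow2 : Tendsto (fun x : ℝ => x ^ (2 - γ)) atTop (nhds 0) := by
    have h := tendsto_rpow_neg_atTop (y := γ - 2) (by linarith)
    simpa [neg_sub] using h
  have hrpow1 : Tendsto (fun x : ℝ => x ^ (1 - γ)) atTop (nhds 0) := by
    have h := tendsto_rpow_neg_atTop (y := γ - 1) (by linarith)
    simpa [neg_sub] using h
  have hAlim : Tendsto (fun x : ℝ => ((x ^ (2 - γ) - 1) / (2 - γ)) / 2) atTop
      (nhds (((0 : ℝ) - 1) / (2 - γ) / 2)) :=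
    (((hrpow2.sub tendsto_const_nhds).div_const _).div_const _)
  have hBlim : Tendsto (fun x : ℝ => (x ^ (1 - γ) - 1) / (1 - γ)) atTop
      (nhds (((0 : ℝ) - 1) / (1 - γ))) :=
    ((hrpow1.sub tendsto_const_nhds).div_const _)
  have hApos : (0:ℝ) < ((0 : ℝ) - 1) / (2 - γ) / 2 := by
    have : (0:ℝ) < ((0:ℝ) - 1) / (2 - γ) := div_pos_of_neg_of_neg (by norm_num) h2γ
    linarith
  have hBpos : (0:ℝ) < ((0 : ℝ) - 1) / (1 - γ) :=
    div_pos_of_neg_of_neg (by norm_num) h1γ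
  have hlogA : Tendsto (fun x : ℝ => Real.log (((x ^ (2 - γ) - 1) / (2 - γ)) / 2)) atTop
      (nhds (Real.log (((0 : ℝ) - 1) / (2 - γ) / 2))) :=
    (Real.continuousAt_log hApos.ne').tendsto.comp hAlim
  have hlogB : Tendsto (fun x : ℝ => Real.log ((x ^ (1 - γ) - 1) / (1 - γ))) atTop
      (nhds (Real.log (((0 : ℝ) - 1) / (1 - γ)))) :=
    (Real.continuousAt_log hBpos.ne').tendsto.comp hBlim
  have ha : Tendsto (fun x : ℝ =>
      Real.log (((x ^ (2 - γ) - 1) / (2 - γ)) / 2) / Real.log x) atTop (nhds 0) :=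
    hlogA.div_atTop Real.tendsto_log_atTop
  have hb : Tendsto (fun x : ℝ =>
      Real.log ((x ^ (1 - γ) - 1) / (1 - γ)) / Real.log x) atTop (nhds 0) :=
    hlogB.div_atTop Real.tendsto_log_atTop
  have hg : Tendsto (fun x : ℝ =>
      (γ + Real.log (((x ^ (2 - γ) - 1) / (2 - γ)) / 2) / Real.log x) /
      (γ + Real.log ((x ^ (1 - γ) - 1) / (1 - γ)) / Real.log x)) atTop (nhds 1) := by
    have := (((tendsto_const_nhds (x := γ)).add ha).div ((tendsto_const_nhds (x := γ)).add hb)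
      (by simpa using hγ0.ne'))
    simp only [add_zero, div_self hγ0.ne'] at this
    exact this
  refine Tendsto.congr' ?_ hg
  filter_upwards [eventually_gt_atTop 1] with x hx
  have hx0 : (0:ℝ) < x := zero_lt_one.trans hx
  have hL : 0 < Real.log x := Real.log_pos hx
  have hu : 0 < (x ^ (2 - γ) - 1) / (2 - γ) :=
    div_pos_of_neg_of_neg (by nlinarith [Real.rpow_lt_one_of_one_lt_of_neg hx h2γ]) h2γ
  have hv : 0 < (x ^ (1 - γ) - 1) / (1 - γ) :=
    div_pos_of_neg_of_neg (by nlinarith [Real.rpow_lt_one_of_one_lt_of_neg hx h1γ]) h1γ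
  have hxγ : 0 < x ^ γ := Real.rpow_pos_of_pos hx0 γ
  have he : (x ^ γ / 2) * ((x ^ (2 - γ) - 1) / (2 - γ))
      = x ^ γ * (((x ^ (2 - γ) - 1) / (2 - γ)) / 2) := by ring
  have hlogE : Real.log ((x ^ γ / 2) * ((x ^ (2 - γ) - 1) / (2 - γ)))
      = γ * Real.log x + Real.log (((x ^ (2 - γ) - 1) / (2 - γ)) / 2) := by
    rw [he, Real.log_mul hxγ.ne' (by positivity), Real.log_rpow hx0]
  have hlogN : Real.log (x ^ γ * ((x ^ (1 - γ) - 1) / (1 - γ)))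
      = γ * Real.log x + Real.log ((x ^ (1 - γ) - 1) / (1 - γ)) := by
    rw [Real.log_mul hxγ.ne' hv.ne', Real.log_rpow hx0]
  rw [← ratio_rewrite γ _ _ _ hL.ne', ← hlogE, ← hlogN]
end

section
/- Suppose a graph with maximum degree d_max has c·d^{-γ} nodes of degree d with 0 < γ < 1 and log c = γ log d_max. Then as d_max → ∞, log(e)/log(n) converges to 2, i.e., the graph densifies maximally (number of edges grows quadratically in the number of nodes). -/
open Filter Real

/-- Constant-exponent power-law degree distribution, case `0 < γ < 1`: with
`c · d^{-γ}` nodes of degree `d` up to `d_max`, where `log c = γ log d_max`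
(i.e. `c = d_max^γ`), the number of nodes is `n = c(d_max^{1-γ}-1)/(1-γ)` and
the number of edges is `e = (c/2)(d_max^{2-γ}-1)/(2-γ)`; the densification
exponent `log e / log n` converges to `2` (maximal densification) as `d_max → ∞`. -/
theorem dpl_exponent_of_constant_degree_exponent_low
    (γ : ℝ) (hγ0 : 0 < γ) (hγ1 : γ < 1) :
    Tendsto
      (fun dmax : ℝ =>
        Real.log ((dmax ^ γ / 2) * ((dmax ^ (2 - γ) - 1) / (2 - γ))) /
        Real.log (dmax ^ γ * ((dmax ^ (1 - γ) - 1) / (1 - γ))))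
      atTop (nhds 2) := by
  have h2γ : (0:ℝ) < 2 - γ := by linarith
  have h1γ : (0:ℝ) < 1 - γ := by linarith
  -- auxiliary limits
  have hrp1 : Tendsto (fun d : ℝ => d ^ (γ - 2)) atTop (nhds 0) := by
    have := tendsto_rpow_neg_atTop h2γ
    simpa [neg_sub] using this
  have hrp2 : Tendsto (fun d : ℝ => d ^ (γ - 1)) atTop (nhds 0) := by
    have := tendsto_rpow_neg_atTop h1γ
    simpa [neg_sub] using this
  have hA : Tendsto (fun d : ℝ => Real.log ((1 - d ^ (γ - 2)) / (2 * (2 - γ))))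
      atTop (nhds (Real.log (1 / (2 * (2 - γ))))) := by
    have h1 : Tendsto (fun d : ℝ => (1 - d ^ (γ - 2)) / (2 * (2 - γ))) atTop
        (nhds (1 / (2 * (2 - γ)))) := by
      simpa using (hrp1.const_sub 1).div_const (2 * (2 - γ))
    exact ((Real.continuousAt_log (by positivity)).tendsto).comp h1
  have hB : Tendsto (fun d : ℝ => Real.log ((1 - d ^ (γ - 1)) / (1 - γ)))
      atTop (nhds (Real.log (1 / (1 - γ)))) := by
    have h1 : Tendsto (fun d : ℝ => (1 - d ^ (γ - 1)) / (1 - γ)) atTop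
        (nhds (1 / (1 - γ))) := by
      simpa using (hrp2.const_sub 1).div_const (1 - γ)
    exact ((Real.continuousAt_log (by positivity)).tendsto).comp h1
  have hA0 : Tendsto (fun d : ℝ =>
      Real.log ((1 - d ^ (γ - 2)) / (2 * (2 - γ))) / Real.log d) atTop (nhds 0) :=
    hA.div_atTop Real.tendsto_log_atTop
  have hB0 : Tendsto (fun d : ℝ =>
      Real.log ((1 - d ^ (γ - 1)) / (1 - γ)) / Real.log d) atTop (nhds 0) :=
    hB.div_atTop Real.tendsto_log_atTop
  have key : Tendsto (fun d : ℝ =>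
      (2 + Real.log ((1 - d ^ (γ - 2)) / (2 * (2 - γ))) / Real.log d) /
      (1 + Real.log ((1 - d ^ (γ - 1)) / (1 - γ)) / Real.log d)) atTop (nhds 2) := by
    have := (hA0.const_add 2).div (hB0.const_add 1) (by norm_num : (1:ℝ) + 0 ≠ 0)
    convert this using 2 <;> norm_num
  refine key.congr' ?_
  filter_upwards [eventually_gt_atTop 1] with d hd
  have hd0 : (0:ℝ) < d := lt_trans one_pos hd
  have hL : 0 < Real.log d := Real.log_pos hd
  have hC1 : 0 < 1 - d ^ (γ - 2) := by
    have := Real.rpow_lt_one_of_one_lt_of_neg hd (by linarith : γ - 2 < 0)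
    linarith
  have hC2 : 0 < 1 - d ^ (γ - 1) := by
    have := Real.rpow_lt_one_of_one_lt_of_neg hd (by linarith : γ - 1 < 0)
    linarith
  have hmul1 : d ^ γ * d ^ (2 - γ) = d ^ (2:ℝ) := by
    rw [← Real.rpow_add hd0]; ring_nf
  have hmul2 : d ^ ((2:ℝ)) * d ^ (γ - 2) = d ^ γ := by
    rw [← Real.rpow_add hd0]; ring_nf
  have hmul3 : d ^ γ * d ^ (1 - γ) = d ^ (1:ℝ) := by
    rw [← Real.rpow_add hd0]; ring_nf
  have hmul4 : d ^ ((1:ℝ)) * d ^ (γ - 1) = d ^ γ := by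
    rw [← Real.rpow_add hd0]; ring_nf
  have hinv1 : d ^ (2 - γ) * d ^ (γ - 2) = 1 := by
    rw [← Real.rpow_add hd0]; norm_num
  have hinv2 : d ^ (1 - γ) * d ^ (γ - 1) = 1 := by
    rw [← Real.rpow_add hd0]; norm_num
  have e1 : d ^ (2 - γ) - 1 = d ^ (2 - γ) * (1 - d ^ (γ - 2)) := by
    linear_combination hinv1
  have e2 : d ^ (1 - γ) - 1 = d ^ (1 - γ) * (1 - d ^ (γ - 1)) := by
    linear_combination hinv2
  have he : d ^ γ / 2 * ((d ^ (2 - γ) - 1) / (2 - γ)) =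
      d ^ (2:ℝ) * ((1 - d ^ (γ - 2)) / (2 * (2 - γ))) := by
    have hne : (2 - γ) ≠ 0 := h2γ.ne'
    rw [e1, ← hmul1]; field_simp
  have hn : d ^ γ * ((d ^ (1 - γ) - 1) / (1 - γ)) =
      d ^ (1:ℝ) * ((1 - d ^ (γ - 1)) / (1 - γ)) := by
    have hne : (1 - γ) ≠ 0 := h1γ.ne'
    rw [e2, ← hmul3]; field_simp
  have hp2 : (0:ℝ) < d ^ (2:ℝ) := Real.rpow_pos_of_pos hd0 _
  have hp1 : (0:ℝ) < d ^ (1:ℝ) := Real.rpow_pos_of_pos hd0 _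
  have hloge : Real.log (d ^ γ / 2 * ((d ^ (2 - γ) - 1) / (2 - γ))) =
      2 * Real.log d + Real.log ((1 - d ^ (γ - 2)) / (2 * (2 - γ))) := by
    rw [he, Real.log_mul (ne_of_gt hp2) (by positivity), Real.log_rpow hd0]
  have hlogn : Real.log (d ^ γ * ((d ^ (1 - γ) - 1) / (1 - γ))) =
      Real.log d + Real.log ((1 - d ^ (γ - 1)) / (1 - γ)) := by
    rw [hn, Real.log_mul (ne_of_gt hp1) (by positivity), Real.log_rpow hd0]
    ring
  rw [hloge, hlogn]
  field_simp
end
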